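/- arXiv:2009.03599 — 4 statements merged into one kernel-verified Lean document; each statement's English description precedes it below -/
import Mathlib

section
/- Let N ≥ 2 and let g : ℝ^N \ {0} → (0,∞) be a radial, decreasing, admissible function. Then there exists a constant C = C(N,g) such that for every 1/2 ≤ r, r' ≤ 3/2 one has |ψ(r,r) − ψ(r',r')| ≤ C |r − r'|. -/
open MeasureTheory Metric Set
open scoped ENNReal NNReal BigOperators Pointwise

noncomputable section

/-- Euclidean space `ℝ^N`. -/
abbrev Euc (N : ℕ) := EuclideanSpace ℝ (Fin N)

/-- The Riesz-type interaction energy `𝔯(F,G) = ∬_{F×G} g(z−w) dz dw`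
for the radial kernel `g(v) = gb ‖v‖`. -/
def riesz2 {N : ℕ} (gb : ℝ → ℝ) (F G : Set (Euc N)) : ℝ :=
  ∫ z in F, ∫ w in G, gb ‖z - w‖

/-- The Riesz-type energy `𝔯(E) = 𝔯(E,E)`. -/
def riesz {N : ℕ} (gb : ℝ → ℝ) (E : Set (Euc N)) : ℝ := riesz2 gb E E

/-- The perimeter of a set (De Giorgi's variational definition: the total variation of the
distributional gradient of the characteristic function), with values in `ℝ≥0∞`. -/
def perimeter {N : ℕ} (E : Set (Euc N)) : ℝ≥0∞ :=
  ⨆ φ : {φ : Euc N → Euc N // ContDiff ℝ 1 φ ∧ HasCompactSupport φ ∧ ∀ x, ‖φ x‖ ≤ 1},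
    ENNReal.ofReal (∫ x in E, ∑ i : Fin N, fderiv ℝ φ.1 x (EuclideanSpace.single i 1) i)

/-- The Gamow-type functional `𝔉_ε(E) = P(E) + ε 𝔯(E)`. -/
def gamow {N : ℕ} (gb : ℝ → ℝ) (ε : ℝ) (E : Set (Euc N)) : ℝ≥0∞ :=
  perimeter E + ENNReal.ofReal (ε * riesz gb E)

/-- The set `E(u)` associated to a function `u` on the unit sphere. -/
def Eset {N : ℕ} (u : Euc N → ℝ) : Set (Euc N) :=
  {z | ∃ x : Euc N, ‖x‖ = 1 ∧ ∃ ρ : ℝ, 0 ≤ ρ ∧ ρ < 1 + u x ∧ z = ρ • x}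

/-- The first vector of the standard basis of `ℝ^N` (junk value `0` if `N = 0`). -/
def e1 (N : ℕ) : Euc N :=
  if h : 0 < N then EuclideanSpace.single (⟨0, h⟩ : Fin N) (1 : ℝ) else 0

/-- `ψ(a,b) = ∫_{B(0,a)} g(y−x) dy` for (any) `x` with `|x| = b`. -/
def psi (N : ℕ) (gb : ℝ → ℝ) (a b : ℝ) : ℝ :=
  ∫ y in ball (0 : Euc N) a, gb ‖y - b • e1 N‖

/-- `J(σ) = ψ(1+σ,1) − ψ(1,1)`. -/
def Jfun (N : ℕ) (gb : ℝ → ℝ) (σ : ℝ) : ℝ := psi N gb (1 + σ) 1 - psi N gb 1 1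

/-- The squared `W^{1,2}(𝕊^{N−1})` norm of (the 0-homogeneous extension of) `u`:
`‖u‖²_{L²(𝕊^{N−1})} + ‖∇_τ u‖²_{L²(𝕊^{N−1})}`, the integrals being with respect to the
`(N−1)`-dimensional Hausdorff measure.  For a function that is `0`-homogeneous, the tangential
gradient on the sphere coincides with the full gradient. -/
def w12normSq {N : ℕ} (u : Euc N → ℝ) : ℝ :=
  (∫ x in sphere (0 : Euc N) 1, (u x) ^ 2 ∂μH[(N : ℝ) - 1]) +
  (∫ x in sphere (0 : Euc N) 1, ‖fderiv ℝ u x‖ ^ 2 ∂μH[(N : ℝ) - 1])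

/-!
Translating by `r e₁` turns `ψ(r,r)` into `Ψ(r) = ∫_{B(-r e₁, r)} g(|x|) dx`. These balls all
touch the origin and increase with `r`, so `Ψ` is nondecreasing; and
`B(-r' e₁, r') = (r'/r) • B(-r e₁, r)`, so the change of variables `x ↦ (r'/r) x` and the
monotonicity of `g` give `Ψ(r') ≤ (r'/r)^N Ψ(r)`. Hence on `[1/2, 3/2]`
`0 ≤ Ψ(r') - Ψ(r) ≤ ((r'/r)^N - 1) Ψ(3/2)`, where `Ψ(3/2)` is finite because admissibility
makes `x ↦ g(|x|)` locally integrable.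
-/

open Module

theorem exists_lipschitzOnWith_of_monotoneOn_of_pow_mul_le {f : ℝ → ℝ} {a b : ℝ} {n : ℕ}
    (ha : 0 < a) (hmono : MonotoneOn f (Icc a b))
    (hgrowth : ∀ r ∈ Icc a b, ∀ r' ∈ Icc a b, r ≤ r' → r ^ n * f r' ≤ r' ^ n * f r) :
    ∃ K, LipschitzOnWith K f (Icc a b) := by
  set M := n * b ^ (n - 1) * |f b|
  refine ⟨Real.toNNReal (M / a ^ n), LipschitzOnWith.of_le_add_mul' _ fun r' hr' r hr => ?_⟩
  rcases le_total r' r with hle | hle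
  · have hb : 0 ≤ b := ha.le.trans (hr.1.trans hr.2)
    have hK : 0 ≤ M / a ^ n := by positivity
    nlinarith [hmono hr' hr hle, dist_nonneg (x := r') (y := r)]
  rw [Real.dist_eq, abs_of_nonneg (sub_nonneg.2 hle)]
  have hr0 : 0 < r := ha.trans_le hr.1
  have hfr : f r ≤ |f b| := (hmono hr ⟨hr.1.trans hr.2, le_rfl⟩ hr.2).trans (le_abs_self _)
  have hpow : r' ^ n - r ^ n ≤ n * b ^ (n - 1) * (r' - r) := by
    have h := abs_pow_sub_pow_le r' r n
    rw [abs_of_nonneg (sub_nonneg.2 (pow_le_pow_left₀ hr0.le hle n)),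
      abs_of_nonneg (sub_nonneg.2 hle), abs_of_pos hr0, abs_of_pos (hr0.trans_le hle),
      max_eq_left hle] at h
    calc r' ^ n - r ^ n ≤ (r' - r) * n * r' ^ (n - 1) := h
      _ ≤ (r' - r) * n * b ^ (n - 1) := by
          gcongr
          exacts [hr0.le.trans hle, hr'.2]
      _ = n * b ^ (n - 1) * (r' - r) := by ring
  have hkey : r ^ n * (f r' - f r) ≤ M * (r' - r) :=
    calc r ^ n * (f r' - f r) ≤ (r' ^ n - r ^ n) * f r := by
          linarith [hgrowth r hr r' hr' hle]
      _ ≤ (r' ^ n - r ^ n) * |f b| :=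
          mul_le_mul_of_nonneg_left hfr (sub_nonneg.2 (pow_le_pow_left₀ hr0.le hle n))
      _ ≤ M * (r' - r) := by
          nlinarith [abs_nonneg (f b)]
  have han : a ^ n ≤ r ^ n := pow_le_pow_left₀ ha.le hr.1 n
  have hmon : 0 ≤ f r' - f r := sub_nonneg.2 (hmono hr hr' hle)
  have hdiff : f r' - f r ≤ M * (r' - r) / a ^ n := by
    rw [le_div_iff₀ (by positivity)]
    nlinarith
  rw [div_mul_eq_mul_div]
  linarith

theorem LocallyIntegrable.integrableOn_ball {X : Type*} [PseudoMetricSpace X] [ProperSpace X]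
    [MeasurableSpace X] {μ : Measure X} {f : X → ℝ} (hf : LocallyIntegrable f μ) (x : X)
    (r : ℝ) : IntegrableOn f (ball x r) μ :=
  (hf.integrableOn_isCompact (isCompact_closedBall x r)).mono_set ball_subset_closedBall

theorem setIntegral_ball_zero_comp_sub {G F : Type*} [NormedAddCommGroup G] [MeasurableSpace G]
    [BorelSpace G] [NormedAddCommGroup F] [NormedSpace ℝ F] (μ : Measure G)
    [μ.IsAddRightInvariant] (f : G → F) (x : G) (r : ℝ) :
    ∫ y in ball 0 r, f (y - x) ∂μ = ∫ z in ball (-x) r, f z ∂μ := by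
  have hpre : (· - x) ⁻¹' ball (-x) r = ball 0 r := by ext y; simp [dist_eq_norm]
  rw [← hpre]
  exact (measurePreserving_sub_right μ x).setIntegral_preimage_emb
    (measurableEmbedding_subRight x) f _

theorem ball_neg_smul_subset_ball_neg_smul {E : Type*} [SeminormedAddCommGroup E]
    [NormedSpace ℝ E] {v : E} (hv : ‖v‖ ≤ 1) {r r' : ℝ} (h : r ≤ r') :
    ball (-(r • v)) r ⊆ ball (-(r' • v)) r' := by
  refine ball_subset_ball' ?_
  rw [dist_neg_neg, dist_eq_norm, ← sub_smul, norm_smul, Real.norm_eq_abs,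
    abs_of_nonpos (sub_nonpos.2 h)]
  nlinarith

section RadialKernel

variable {E : Type*} [NormedAddCommGroup E] [NormedSpace ℝ E] [MeasurableSpace E] [BorelSpace E]
  [FiniteDimensional ℝ E] (μ : Measure E) [μ.IsAddHaarMeasure] {g : ℝ → ℝ}

theorem locallyIntegrable_comp_norm [Nontrivial E] (hg : AntitoneOn g (Ioi 0))
    (hadm : IntegrableOn (fun t => g t * t ^ (finrank ℝ E - 1)) (Ioo 0 1)) :
    LocallyIntegrable (fun x => g ‖x‖) μ := by
  rw [locallyIntegrable_iff]
  intro k hk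
  obtain ⟨R, hR⟩ := hk.isBounded.subset_ball 0
  refine IntegrableOn.mono_set ?_ hR
  rw [integrableOn_fun_norm_addHaar]
  have hnear : IntegrableOn (fun t => t ^ (finrank ℝ E - 1) • g t) (Ioo 0 1) := by
    simpa only [smul_eq_mul, mul_comm] using hadm
  have hfar : IntegrableOn (fun t => t ^ (finrank ℝ E - 1) • g t) (Icc 1 R) :=
    (hg.mono fun t ht => zero_lt_one.trans_le ht.1).integrableOn_isCompact isCompact_Icc
      |>.continuousOn_mul (by fun_prop) isCompact_Icc
  refine (hnear.union hfar).mono_set fun t ht => ?_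
  rcases lt_or_ge t 1 with h | h
  · exact Or.inl ⟨ht.1, h⟩
  · exact Or.inr ⟨h, ht.2.le⟩

theorem setIntegral_smul_set_le_pow_mul [Nontrivial E] (hg : AntitoneOn g (Ioi 0))
    (hg0 : ∀ t, 0 < t → 0 ≤ g t) {s : Set E} (hs : IntegrableOn (fun x => g ‖x‖) s μ)
    {c : ℝ} (hc : 1 ≤ c) :
    ∫ x in c • s, g ‖x‖ ∂μ ≤ c ^ finrank ℝ E * ∫ x in s, g ‖x‖ ∂μ := by
  have hc0 : 0 < c := zero_lt_one.trans_le hc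
  have hscale := Measure.setIntegral_comp_smul_of_pos μ (fun x => g ‖x‖) s hc0
  rw [eq_inv_smul_iff₀ (pow_ne_zero _ hc0.ne')] at hscale
  rw [← hscale, smul_eq_mul]
  refine mul_le_mul_of_nonneg_left (integral_mono_of_nonneg ?_ hs ?_) (by positivity)
  all_goals
    filter_upwards [ae_restrict_of_ae (Measure.ae_ne μ 0)] with x hx
    have hx0 : 0 < ‖x‖ := norm_pos_iff.2 hx
    rw [norm_smul, Real.norm_eq_abs, abs_of_pos hc0]
  · exact hg0 _ (by positivity)
  · exact hg hx0 (mem_Ioi.2 (by positivity)) (le_mul_of_one_le_left hx0.le hc)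

theorem monotone_setIntegral_ball_neg_smul [Nontrivial E] (hg0 : ∀ t, 0 < t → 0 ≤ g t)
    (hloc : LocallyIntegrable (fun x => g ‖x‖) μ) {v : E} (hv : ‖v‖ ≤ 1) :
    Monotone fun r => ∫ x in ball (-(r • v)) r, g ‖x‖ ∂μ := by
  intro r r' h
  refine setIntegral_mono_set (LocallyIntegrable.integrableOn_ball hloc _ _) ?_
    (ball_neg_smul_subset_ball_neg_smul hv h).eventuallyLE
  filter_upwards [ae_restrict_of_ae (Measure.ae_ne μ 0)] with x hx
  exact hg0 _ (norm_pos_iff.2 hx)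

theorem pow_mul_setIntegral_ball_neg_smul_le [Nontrivial E] (hg : AntitoneOn g (Ioi 0))
    (hg0 : ∀ t, 0 < t → 0 ≤ g t) (hloc : LocallyIntegrable (fun x => g ‖x‖) μ) (v : E)
    {r r' : ℝ} (hr : 0 < r) (h : r ≤ r') :
    r ^ finrank ℝ E * ∫ x in ball (-(r' • v)) r', g ‖x‖ ∂μ ≤
      r' ^ finrank ℝ E * ∫ x in ball (-(r • v)) r, g ‖x‖ ∂μ := by
  have hr' : 0 < r' := hr.trans_le h
  have hball : ball (-(r' • v)) r' = (r' / r) • ball (-(r • v)) r := by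
    rw [_root_.smul_ball (div_pos hr' hr).ne', smul_neg, smul_smul, div_mul_cancel₀ _ hr.ne',
      Real.norm_eq_abs, abs_of_pos (div_pos hr' hr), div_mul_cancel₀ _ hr.ne']
  have hdil := setIntegral_smul_set_le_pow_mul μ hg hg0
    (LocallyIntegrable.integrableOn_ball hloc (-(r • v)) r) ((one_le_div hr).2 h)
  rw [← hball, div_pow, div_mul_eq_mul_div, le_div_iff₀' (by positivity)] at hdil
  exact hdil

end RadialKernel

/-- There is a constant `C = C(N,g)` such that for every `1/2 ≤ r, r' ≤ 3/2` one has
`|ψ(r,r) − ψ(r',r')| ≤ C |r − r'|`. -/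
theorem psi_diag_lipschitz {N : ℕ} (hN : 2 ≤ N) (gb : ℝ → ℝ)
    (hpos : ∀ t : ℝ, 0 < t → 0 < gb t)
    (hdec : AntitoneOn gb (Set.Ioi (0 : ℝ)))
    (hadm : IntegrableOn (fun t : ℝ => gb t * t ^ (N - 1)) (Set.Ioo (0 : ℝ) 1)) :
    ∃ C : ℝ, ∀ r r' : ℝ, 1 / 2 ≤ r → r ≤ 3 / 2 → 1 / 2 ≤ r' → r' ≤ 3 / 2 →
      |psi N gb r r - psi N gb r' r'| ≤ C * |r - r'| := by
  have hdim : finrank ℝ (Euc N) = N := finrank_euclideanSpace_fin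
  have : Nontrivial (Euc N) := Module.nontrivial_of_finrank_pos (R := ℝ) (by omega)
  have he1 : ‖e1 N‖ ≤ 1 := by simp [e1, show 0 < N by omega]
  have hg0 : ∀ t, 0 < t → 0 ≤ gb t := fun t ht => (hpos t ht).le
  have hloc : LocallyIntegrable (fun x : Euc N => gb ‖x‖) :=
    locallyIntegrable_comp_norm volume hdec (by rwa [hdim])
  have hpsi : ∀ r, psi N gb r r = ∫ x in ball (-(r • e1 N)) r, gb ‖x‖ :=
    fun r => setIntegral_ball_zero_comp_sub volume (fun x => gb ‖x‖) _ r
  obtain ⟨K, hK⟩ := exists_lipschitzOnWith_of_monotoneOn_of_pow_mul_le (n := N) (by norm_num)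
    ((monotone_setIntegral_ball_neg_smul volume hg0 hloc he1).monotoneOn (Icc (1 / 2) (3 / 2)))
    fun r hr r' _ h => by
      simpa only [hdim] using pow_mul_setIntegral_ball_neg_smul_le volume hdec hg0 hloc (e1 N)
        (by linarith [hr.1]) h
  refine ⟨K, fun r r' h1 h2 h3 h4 => ?_⟩
  simpa only [hpsi, Real.dist_eq] using hK.dist_le_mul r ⟨h1, h2⟩ r' ⟨h3, h4⟩
end
end

section
/- Let N ≥ 2 and let g : ℝ^N \ {0} → (0,∞) be a radial, decreasing, admissible function. Then there exists a constant C = C(N,g) such that for every 0 < σ ≤ 1/4 one has |∫_{A(σ) ∩ B(0,2σ)} g(w) dw − ∫_{A(−σ) ∩ B(0,2σ)} g(w) dw| ≤ C σ, where A(σ) = B(−e₁, 1+σ) \ B(−e₁, 1) and A(−σ) = B(−e₁, 1) \ B(−e₁, 1−σ). -/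
open MeasureTheory Metric Set
open scoped ENNReal NNReal BigOperators Pointwise

noncomputable section

/-!
Let `e` be the common (unit) centre of the annuli. The point reflection `w ↦ -w` carries `A(-σ)`
onto the annulus with the same radii around `-e`, so the difference of the two integrals is at most
the integral of `|g(|w|)|` over the symmetric difference `D` of `A(σ) ∩ B(0,2σ)` and the reflected
`A(-σ) ∩ B(0,2σ)`. Writing `w = t e + y` with `y ⊥ e`, the equations of the four spheres show that
the line `t ↦ t e + y` meets `D` inside two intervals of length `2|y|²`, centred at `t = 0` and
`t = -σ`, where `g(|w|) ≤ g(|y|)`. Integrating over `|y| < 2σ` bounds the difference by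
`8σ ∫_{|y|<1} |y| g(|y|) dy`, an integral over the `(N-1)`-dimensional hyperplane `e^⊥` that is
finite exactly when `g` is admissible.
-/

open scoped RealInnerProductSpace
open Module

theorem abs_setIntegral_sub_setIntegral_le {α : Type*} [MeasurableSpace α] {μ : Measure α}
    {f : α → ℝ} {s t : Set α} (hs : MeasurableSet s) (ht : MeasurableSet t)
    (hf : IntegrableOn f (s ∪ t) μ) :
    |(∫ x in s, f x ∂μ) - ∫ x in t, f x ∂μ| ≤ ∫ x in symmDiff s t, |f x| ∂μ := by
  have hst := integral_inter_add_sdiff ht (hf.mono_set subset_union_left)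
  have hts := integral_inter_add_sdiff hs (hf.mono_set subset_union_right)
  rw [inter_comm] at hts
  rw [Set.symmDiff_def, setIntegral_union disjoint_sdiff_sdiff (ht.diff hs)
    (hf.mono_set (sdiff_subset.trans subset_union_left)).abs
    (hf.mono_set (sdiff_subset.trans subset_union_right)).abs]
  calc |(∫ x in s, f x ∂μ) - ∫ x in t, f x ∂μ|
      = |(∫ x in s \ t, f x ∂μ) - ∫ x in t \ s, f x ∂μ| := by rw [← hst, ← hts]; ring_nf
    _ ≤ |∫ x in s \ t, f x ∂μ| + |∫ x in t \ s, f x ∂μ| := abs_sub _ _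
    _ ≤ _ := add_le_add abs_integral_le_integral_abs abs_integral_le_integral_abs

def defectSlice (σ s : ℝ) : Set ℝ := Icc (-s) s ∪ Icc (-σ - s) (-σ + s)

theorem volume_defectSlice_le (σ : ℝ) {s : ℝ} (hs : 0 ≤ s) :
    volume (defectSlice σ s) ≤ ENNReal.ofReal (4 * s) := by
  calc volume (defectSlice σ s)
      ≤ volume (Icc (-s) s) + volume (Icc (-σ - s) (-σ + s)) := measure_union_le _ _
    _ = ENNReal.ofReal (4 * s) := by
      rw [Real.volume_Icc, Real.volume_Icc, ← ENNReal.ofReal_add (by linarith) (by linarith)]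
      ring_nf

/-- Here `a`, `b`, `r` are the distances from a point `w` to `e`, to `-e` and to `0`, and
`u = ⟪w, e⟫`, for a unit vector `e`; `r ^ 2 - u ^ 2` is the squared distance from `w` to `ℝ e`. -/
theorem mem_defectSlice_of_xor {u r a b σ : ℝ} (hσ : 0 < σ) (hσ' : σ ≤ 1 / 4) (hr : r < 2 * σ)
    (hu : |u| ≤ r) (ha0 : 0 ≤ a) (hb0 : 0 ≤ b)
    (ha : a ^ 2 = r ^ 2 - 2 * u + 1) (hb : b ^ 2 = r ^ 2 + 2 * u + 1)
    (h : Xor (a < 1 + σ ∧ 1 ≤ a) (b < 1 ∧ 1 - σ ≤ b)) :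
    u ∈ defectSlice σ (r ^ 2 - u ^ 2) := by
  obtain ⟨hu1, hu2⟩ := abs_le.mp hu
  have hur : u ^ 2 ≤ r ^ 2 := sq_le_sq' hu1 hu2
  rcases h with ⟨⟨ha2, ha1⟩, hb'⟩ | ⟨⟨hb2, hb1⟩, ha'⟩
  · rw [not_and_or, not_lt, not_le] at hb'
    rcases hb' with hb1 | hb1
    · have h1 : 2 * u ≤ r ^ 2 := by nlinarith
      have h2 : -(2 * u) ≤ r ^ 2 := by nlinarith
      left
      constructor <;> nlinarith
    · have hb2 : b ^ 2 < (1 - σ) ^ 2 := pow_lt_pow_left₀ hb1 hb0 two_ne_zero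
      have ha2 : a ^ 2 < (1 + σ) ^ 2 := pow_lt_pow_left₀ ha2 ha0 two_ne_zero
      have hrσ : r < σ := lt_of_pow_lt_pow_left₀ 2 hσ.le (by linarith)
      nlinarith [mul_pos (show 0 < u + σ by linarith) (show 0 < u - σ + 2 by linarith)]
  · rw [not_and_or, not_lt, not_le] at ha'
    rcases ha' with ha1 | ha1
    · have h1 : (1 + σ) ^ 2 ≤ a ^ 2 := pow_le_pow_left₀ (by linarith) ha1 2
      have h2 : (1 - σ) ^ 2 ≤ b ^ 2 := pow_le_pow_left₀ (by linarith) hb1 2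
      right
      constructor
      · rcases le_or_gt 0 (u + σ) with hus | hus
        · nlinarith
        · nlinarith [mul_neg_of_neg_of_pos hus (show 0 < 1 + u - σ by linarith)]
      · rcases le_or_gt (u + σ) 0 with hus | hus
        · nlinarith
        · nlinarith [mul_pos hus (show 0 < 1 - u + σ by linarith)]
    · have : a ^ 2 < 1 := by nlinarith
      have : b ^ 2 < 1 := by nlinarith
      nlinarith

def annulusNearOrigin {E : Type*} [NormedAddCommGroup E] (c : E) (r R ρ : ℝ) : Set E :=
  (ball c R \ ball c r) ∩ ball 0 ρ

theorem measurableSet_annulusNearOrigin {E : Type*} [NormedAddCommGroup E] [MeasurableSpace E]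
    [OpensMeasurableSpace E] (c : E) (r R ρ : ℝ) : MeasurableSet (annulusNearOrigin c r R ρ) :=
  (measurableSet_ball.diff measurableSet_ball).inter measurableSet_ball

section InnerProductSpace

variable {E : Type*} [NormedAddCommGroup E] [InnerProductSpace ℝ E]

theorem mem_defectSlice_of_mem_symmDiff {e w : E} (he : ‖e‖ = 1) {σ : ℝ} (hσ : 0 < σ)
    (hσ' : σ ≤ 1 / 4)
    (hw : w ∈ symmDiff (annulusNearOrigin e 1 (1 + σ) (2 * σ))
      (annulusNearOrigin (-e) (1 - σ) 1 (2 * σ))) :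
    ‖w‖ < 2 * σ ∧ ⟪w, e⟫ ∈ defectSlice σ (‖w‖ ^ 2 - ⟪w, e⟫ ^ 2) := by
  rw [annulusNearOrigin, annulusNearOrigin, ← inter_symmDiff_distrib_right] at hw
  obtain ⟨hxor, hw0⟩ := hw
  rw [mem_ball_zero_iff] at hw0
  refine ⟨hw0, mem_defectSlice_of_xor hσ hσ' hw0 ?_ (norm_nonneg (w - e)) (norm_nonneg (w + e))
    ?_ ?_ ?_⟩
  · simpa [he] using abs_real_inner_le_norm w e
  · rw [norm_sub_sq_real, he]; ring
  · rw [norm_add_sq_real, he]; ring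
  · simp only [Set.mem_symmDiff, mem_sdiff, mem_ball, dist_eq_norm, sub_neg_eq_add, not_lt]
      at hxor
    exact hxor

theorem finrank_orthogonal_span_singleton_add_one [FiniteDimensional ℝ E] {e : E} (he : e ≠ 0) :
    finrank ℝ (ℝ ∙ e)ᗮ + 1 = finrank ℝ E := by
  rw [← (ℝ ∙ e).finrank_add_finrank_orthogonal, finrank_span_singleton he, add_comm]

theorem inner_smul_add_orthogonal {e : E} (he : ‖e‖ = 1) (y : (ℝ ∙ e)ᗮ) (t : ℝ) :
    ⟪t • e + y, e⟫ = t := by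
  have hy : ⟪(y : E), e⟫ = 0 :=
    Submodule.inner_left_of_mem_orthogonal (Submodule.mem_span_singleton_self e) y.2
  rw [inner_add_left, inner_smul_left, hy, real_inner_self_eq_norm_sq, he]
  simp

theorem norm_sq_smul_add_orthogonal {e : E} (he : ‖e‖ = 1) (y : (ℝ ∙ e)ᗮ) (t : ℝ) :
    ‖t • e + y‖ ^ 2 = t ^ 2 + ‖y‖ ^ 2 := by
  have hy : ⟪t • e, (y : E)⟫ = 0 := Submodule.inner_right_of_mem_orthogonal
    (Submodule.smul_mem _ t (Submodule.mem_span_singleton_self e)) y.2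
  rw [norm_add_sq_real, hy, norm_smul, he, Real.norm_eq_abs, mul_one, sq_abs]
  simp

theorem norm_le_norm_smul_add_orthogonal {e : E} (he : ‖e‖ = 1) (y : (ℝ ∙ e)ᗮ) (t : ℝ) :
    ‖y‖ ≤ ‖t • e + y‖ :=
  le_of_pow_le_pow_left₀ two_ne_zero (norm_nonneg _)
    (by rw [norm_sq_smul_add_orthogonal he]; nlinarith)

def smulAddOrthogonalEquiv {e : E} (he : ‖e‖ = 1) : WithLp 2 ((ℝ ∙ e)ᗮ × ℝ) ≃ₗᵢ[ℝ] E :=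
  (LinearIsometryEquiv.withLpProdComm 2 ℝ _ _).trans
    ((LinearIsometryEquiv.withLpProdCongr 2 (LinearIsometryEquiv.toSpanUnitSingleton e he)
      (LinearIsometryEquiv.refl ℝ _)).trans (ℝ ∙ e).orthogonalDecomposition.symm)

theorem smulAddOrthogonalEquiv_apply {e : E} (he : ‖e‖ = 1) (y : (ℝ ∙ e)ᗮ) (t : ℝ) :
    smulAddOrthogonalEquiv he (WithLp.toLp 2 (y, t)) = t • e + y := by
  simp [smulAddOrthogonalEquiv, LinearIsometryEquiv.coe_refl]

theorem lintegral_indicator_smul_add_le {g : ℝ → ℝ} (hg0 : ∀ t, 0 < t → 0 ≤ g t)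
    (hg : AntitoneOn g (Ioi 0)) {e : E} (he : ‖e‖ = 1) {σ : ℝ} {S : Set E} (y : (ℝ ∙ e)ᗮ)
    (hSy : ∀ t : ℝ, t • e + (y : E) ∈ S → t ∈ defectSlice σ (‖y‖ ^ 2)) :
    ∫⁻ t : ℝ, S.indicator (fun w => ‖g ‖w‖‖ₑ) (t • e + y) ≤
      ‖g ‖y‖‖ₑ * ENNReal.ofReal (4 * ‖y‖ ^ 2) := by
  have hsupp : ∫⁻ t : ℝ, S.indicator (fun w => ‖g ‖w‖‖ₑ) (t • e + y) =
      ∫⁻ t in defectSlice σ (‖y‖ ^ 2), S.indicator (fun w => ‖g ‖w‖‖ₑ) (t • e + y) := by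
    refine (setLIntegral_eq_of_support_subset fun t ht => ?_).symm
    by_contra hnot
    exact ht (indicator_of_notMem (fun h => hnot (hSy t h)) _)
  rw [hsupp]
  refine le_trans ?_ (mul_le_mul_right (volume_defectSlice_le σ (sq_nonneg _)) _)
  -- at `y = 0` the bound involves the junk value `g 0`, but the slice `{0, -σ}` is null
  rcases eq_or_ne y 0 with rfl | hy0
  · have hnull : volume (defectSlice σ (‖(0 : (ℝ ∙ e)ᗮ)‖ ^ 2)) = 0 := by
      simpa using volume_defectSlice_le σ le_rfl
    rw [setLIntegral_measure_zero _ _ hnull]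
    exact zero_le
  rw [← setLIntegral_const]
  refine setLIntegral_mono' (measurableSet_Icc.union measurableSet_Icc) fun t _ => ?_
  refine (indicator_le_self (f := fun w : E => ‖g ‖w‖‖ₑ) S _).trans ?_
  have hy : 0 < ‖y‖ := norm_pos_iff.mpr hy0
  have hle := norm_le_norm_smul_add_orthogonal he y t
  rw [enorm_le_iff_norm_le, Real.norm_eq_abs, Real.norm_eq_abs,
    abs_of_nonneg (hg0 _ (hy.trans_le hle)), abs_of_nonneg (hg0 _ hy)]
  exact hg hy (hy.trans_le hle) hle

end InnerProductSpace

section MeasureSpace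

variable {E : Type*} [NormedAddCommGroup E] [InnerProductSpace ℝ E] [FiniteDimensional ℝ E]
  [MeasurableSpace E] [BorelSpace E]

theorem integrableOn_ball_norm_pow_mul [Nontrivial E] {g : ℝ → ℝ} {k : ℕ}
    (hg : IntegrableOn (fun t => g t * t ^ (finrank ℝ E - 1 + k)) (Ioo 0 1)) :
    IntegrableOn (fun y : E => ‖y‖ ^ k * g ‖y‖) (ball 0 1) := by
  rw [integrableOn_fun_norm_addHaar volume (f := fun t => t ^ k * g t)]
  refine hg.congr_fun (fun t _ => ?_) measurableSet_Ioo
  simp only [smul_eq_mul, pow_add]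
  ring

theorem setIntegral_annulusNearOrigin_neg (f : ℝ → ℝ) (c : E) (r R ρ : ℝ) :
    (∫ w in annulusNearOrigin (-c) r R ρ, f ‖w‖) = ∫ w in annulusNearOrigin c r R ρ, f ‖w‖ := by
  have hpre : (fun w : E => -w) ⁻¹' annulusNearOrigin (-c) r R ρ = annulusNearOrigin c r R ρ := by
    ext w
    simp [annulusNearOrigin, mem_ball, dist_eq_norm]
  have := (Measure.measurePreserving_neg (volume : Measure E)).setIntegral_preimage_emb
    (Homeomorph.neg E).measurableEmbedding (fun w => f ‖w‖) (annulusNearOrigin (-c) r R ρ)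
  simpa only [hpre, norm_neg] using this.symm

theorem lintegral_le_lintegral_lintegral_smul_add {e : E} (he : ‖e‖ = 1) (F : E → ℝ≥0∞) :
    ∫⁻ w, F w ≤ ∫⁻ y : (ℝ ∙ e)ᗮ, ∫⁻ t : ℝ, F (t • e + y) := by
  let Φ : (ℝ ∙ e)ᗮ × ℝ → E := fun p => smulAddOrthogonalEquiv he (WithLp.toLp 2 p)
  have hΦ : MeasurePreserving Φ :=
    (smulAddOrthogonalEquiv he).measurePreserving.comp (WithLp.volume_preserving_toLp _ _)
  have hΦemb : MeasurableEmbedding Φ :=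
    (smulAddOrthogonalEquiv he).toHomeomorph.measurableEmbedding.comp
      (MeasurableEquiv.toLp 2 _).measurableEmbedding
  rw [← hΦ.lintegral_comp_emb hΦemb]
  refine (lintegral_prod_le (F ∘ Φ)).trans_eq ?_
  simp only [Function.comp_apply, Φ, smulAddOrthogonalEquiv_apply]

theorem lintegral_le_of_forall_mem_defectSlice {g : ℝ → ℝ} (hg0 : ∀ t, 0 < t → 0 ≤ g t)
    (hg : AntitoneOn g (Ioi 0)) {e : E} (he : ‖e‖ = 1) {σ : ℝ} {S : Set E}
    (hS : MeasurableSet S)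
    (hSD : ∀ w ∈ S, ‖w‖ < 2 * σ ∧ ⟪w, e⟫ ∈ defectSlice σ (‖w‖ ^ 2 - ⟪w, e⟫ ^ 2)) :
    ∫⁻ w in S, ‖g ‖w‖‖ₑ ≤
      ENNReal.ofReal (8 * σ) * ∫⁻ y in ball (0 : (ℝ ∙ e)ᗮ) (2 * σ), ‖‖y‖ * g ‖y‖‖ₑ := by
  have hslice : ∀ (y : (ℝ ∙ e)ᗮ) (t : ℝ), t • e + (y : E) ∈ S →
      ‖y‖ < 2 * σ ∧ t ∈ defectSlice σ (‖y‖ ^ 2) := by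
    intro y t h
    obtain ⟨h1, h2⟩ := hSD _ h
    rw [inner_smul_add_orthogonal he, norm_sq_smul_add_orthogonal he, add_sub_cancel_left] at h2
    exact ⟨(norm_le_norm_smul_add_orthogonal he y t).trans_lt h1, h2⟩
  rw [← lintegral_indicator hS]
  refine (lintegral_le_lintegral_lintegral_smul_add he _).trans ?_
  rw [← lintegral_indicator measurableSet_ball, ← lintegral_const_mul' _ _ ENNReal.ofReal_ne_top]
  refine lintegral_mono fun y => ?_
  by_cases hy : ‖y‖ < 2 * σ
  swap
  · have hzero : ∀ t : ℝ, S.indicator (fun w => ‖g ‖w‖‖ₑ) (t • e + y) = 0 :=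
      fun t => indicator_of_notMem (fun h => hy (hslice y t h).1) _
    simp only [hzero, lintegral_zero]
    exact zero_le
  rw [indicator_of_mem (mem_ball_zero_iff.mpr hy)]
  refine (lintegral_indicator_smul_add_le hg0 hg he y fun t h => (hslice y t h).2).trans ?_
  have h4 : ENNReal.ofReal (4 * ‖y‖ ^ 2) ≤ ENNReal.ofReal (8 * σ) * ‖y‖ₑ := by
    rw [← ofReal_norm, ← ENNReal.ofReal_mul (by linarith [norm_nonneg y])]
    exact ENNReal.ofReal_le_ofReal (by nlinarith [norm_nonneg y])
  rw [enorm_mul, enorm_norm, mul_comm, ← mul_assoc]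
  gcongr

theorem abs_setIntegral_annulusNearOrigin_sub_le {g : ℝ → ℝ} (hg0 : ∀ t, 0 < t → 0 ≤ g t)
    (hg : AntitoneOn g (Ioi 0)) {e : E} (he : ‖e‖ = 1)
    (hgE : IntegrableOn (fun w : E => g ‖w‖) (ball 0 1))
    (hgK : IntegrableOn (fun y : (ℝ ∙ e)ᗮ => ‖y‖ * g ‖y‖) (ball 0 1)) {σ : ℝ} (hσ : 0 < σ)
    (hσ' : σ ≤ 1 / 4) :
    |(∫ w in annulusNearOrigin e 1 (1 + σ) (2 * σ), g ‖w‖) -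
        ∫ w in annulusNearOrigin e (1 - σ) 1 (2 * σ), g ‖w‖| ≤
      8 * (∫ y in ball (0 : (ℝ ∙ e)ᗮ) 1, ‖‖y‖ * g ‖y‖‖) * σ := by
  rw [← setIntegral_annulusNearOrigin_neg g e (1 - σ),
    integral_norm_eq_lintegral_enorm hgK.aestronglyMeasurable]
  set A := annulusNearOrigin e 1 (1 + σ) (2 * σ)
  set B := annulusNearOrigin (-e) (1 - σ) 1 (2 * σ)
  have hAB : IntegrableOn (fun w : E => g ‖w‖) (A ∪ B) :=
    hgE.mono_set (union_subset (inter_subset_right.trans (ball_subset_ball (by linarith)))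
      (inter_subset_right.trans (ball_subset_ball (by linarith))))
  calc _ ≤ ∫ w in symmDiff A B, ‖g ‖w‖‖ :=
        abs_setIntegral_sub_setIntegral_le (measurableSet_annulusNearOrigin _ _ _ _)
          (measurableSet_annulusNearOrigin _ _ _ _) hAB
    _ = (∫⁻ w in symmDiff A B, ‖g ‖w‖‖ₑ).toReal :=
        integral_norm_eq_lintegral_enorm (hAB.mono_set symmDiff_subset_union).aestronglyMeasurable
    _ ≤ (ENNReal.ofReal (8 * σ) * ∫⁻ y in ball (0 : (ℝ ∙ e)ᗮ) 1, ‖‖y‖ * g ‖y‖‖ₑ).toReal := by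
        refine ENNReal.toReal_mono (ENNReal.mul_ne_top ENNReal.ofReal_ne_top hgK.2.ne) ?_
        refine (lintegral_le_of_forall_mem_defectSlice hg0 hg he
          ((measurableSet_annulusNearOrigin _ _ _ _).symmDiff
            (measurableSet_annulusNearOrigin _ _ _ _))
          fun w hw => mem_defectSlice_of_mem_symmDiff he hσ hσ' hw).trans ?_
        exact mul_le_mul_right (lintegral_mono_set (ball_subset_ball (by linarith))) _
    _ = _ := by
        rw [ENNReal.toReal_mul, ENNReal.toReal_ofReal (by positivity)]
        ring

theorem exists_abs_setIntegral_annulusNearOrigin_sub_le (hE : 2 ≤ finrank ℝ E) {g : ℝ → ℝ}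
    (hg0 : ∀ t, 0 < t → 0 ≤ g t) (hg : AntitoneOn g (Ioi 0))
    (hadm : IntegrableOn (fun t => g t * t ^ (finrank ℝ E - 1)) (Ioo 0 1)) {e : E}
    (he : ‖e‖ = 1) :
    ∃ C : ℝ, ∀ σ : ℝ, 0 < σ → σ ≤ 1 / 4 →
      |(∫ w in annulusNearOrigin e 1 (1 + σ) (2 * σ), g ‖w‖) -
        ∫ w in annulusNearOrigin e (1 - σ) 1 (2 * σ), g ‖w‖| ≤ C * σ := by
  have hK := finrank_orthogonal_span_singleton_add_one (ne_zero_of_norm_ne_zero (he ▸ one_ne_zero))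
  have : Nontrivial E := Module.nontrivial_of_finrank_pos (R := ℝ) (by omega)
  have : Nontrivial (ℝ ∙ e)ᗮ := Module.nontrivial_of_finrank_pos (R := ℝ) (by omega)
  have hgE : IntegrableOn (fun w : E => g ‖w‖) (ball 0 1) := by
    simpa using integrableOn_ball_norm_pow_mul (k := 0) (by simpa using hadm)
  have hgK : IntegrableOn (fun y : (ℝ ∙ e)ᗮ => ‖y‖ * g ‖y‖) (ball 0 1) := by
    simpa only [pow_one] using integrableOn_ball_norm_pow_mul (k := 1)
      (by rwa [show finrank ℝ (ℝ ∙ e)ᗮ - 1 + 1 = finrank ℝ E - 1 by omega])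
  exact ⟨_, fun σ hσ hσ' => abs_setIntegral_annulusNearOrigin_sub_le hg0 hg he hgE hgK hσ hσ'⟩

end MeasureSpace

/-- There is a constant `C = C(N,g)` such that for every `0 < σ ≤ 1/4`,
`|∫_{A(σ) ∩ B(0,2σ)} g(w) dw − ∫_{A(−σ) ∩ B(0,2σ)} g(w) dw| ≤ C σ`,
where `A(σ) = B(−e₁,1+σ) \ B(−e₁,1)` and `A(−σ) = B(−e₁,1) \ B(−e₁,1−σ)`. -/
theorem annuli_near_origin_estimate {N : ℕ} (hN : 2 ≤ N) (gb : ℝ → ℝ)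
    (hpos : ∀ t : ℝ, 0 < t → 0 < gb t)
    (hdec : AntitoneOn gb (Set.Ioi (0 : ℝ)))
    (hadm : IntegrableOn (fun t : ℝ => gb t * t ^ (N - 1)) (Set.Ioo (0 : ℝ) 1)) :
    ∃ C : ℝ, ∀ σ : ℝ, 0 < σ → σ ≤ 1 / 4 →
      |(∫ w in (ball (-e1 N) (1 + σ) \ ball (-e1 N) 1) ∩ ball (0 : Euc N) (2 * σ),
          gb ‖w‖) -
        (∫ w in (ball (-e1 N) 1 \ ball (-e1 N) (1 - σ)) ∩ ball (0 : Euc N) (2 * σ),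
          gb ‖w‖)| ≤ C * σ := by
  have hdim : finrank ℝ (Euc N) = N := finrank_euclideanSpace_fin
  have he : ‖-e1 N‖ = 1 := by
    rw [norm_neg, e1, dif_pos (by omega), PiLp.norm_single, norm_one]
  exact exists_abs_setIntegral_annulusNearOrigin_sub_le (by rwa [hdim])
    (fun t ht => (hpos t ht).le) hdec (by rwa [hdim]) he
end
end

section
/- Let 0 < σ ≤ 1/4 and 2σ < t < 1/4, and define the angles θ = arccos(−t/2), θ⁺ = arccos((−t² + 2σ + σ²)/(2t)), and θ⁻ = arccos((−t² − 2σ + σ²)/(2t)). Then θ⁺ < θ < θ⁻, with π/3 < θ⁺, π/2 < θ < 7π/12, θ⁻ < 3π/4, and moreover |θ⁺ + θ⁻ − 2θ| ≤ 5 σ²/t ≤ 3σ. -/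
/-!
Write the two arguments as `a ± h` with `a = (σ² - t²) / (2t)` and `h = σ / t`. Then
`θ⁺ + θ⁻ - 2θ` is the symmetric second difference of `arccos` at `a` with step `h`, plus
`2 (arccos a - arccos (-t/2))`, and `|a + t/2| = σ² / (2t)` bounds the latter by a multiple of
`σ² / t`. A second difference `f (a + h) + f (a - h) - 2 f a` is at most `h² / 2` times the
size of `f'' (a + u) + f'' (a - u)`. The naive bound `|f''| ≤ C` only gives `O(h²) = O(σ² / t²)`,
but `arccos'' x = -x / √(1 - x²)³` is odd, so `f'' (a + u) + f'' (a - u)` is a difference of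
`arccos''` at two points `2|a| ≤ t` apart, which is `O(t)`; this yields `O(t h²) = O(σ² / t)`.
The remaining claims only compare the cosines of the angles.
-/

open Real Set

theorem abs_sub_le_of_abs_deriv_le_mul {F F' : ℝ → ℝ} {h K : ℝ} (hh : 0 ≤ h)
    (hF : ∀ u ∈ Icc 0 h, HasDerivAt F (F' u) u) (hK : ∀ u ∈ Icc 0 h, |F' u| ≤ K * u) :
    |F h - F 0| ≤ K / 2 * h ^ 2 := by
  refine image_norm_le_of_norm_deriv_right_le_deriv_boundary (f := fun u => F u - F 0)
    (B := fun u => K / 2 * u ^ 2) (B' := fun u => K * u)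
    (fun u hu => ((hF u hu).sub_const _).continuousAt.continuousWithinAt)
    (fun u hu => ((hF u (Ico_subset_Icc_self hu)).sub_const _).hasDerivWithinAt)
    (by simp) (fun u => ?_) (fun u hu => hK u (Ico_subset_Icc_self hu)) ⟨hh, le_rfl⟩
  refine ((hasDerivAt_pow 2 u).const_mul (K / 2)).congr_deriv ?_
  ring

theorem abs_symm_second_diff_le {f f' f'' : ℝ → ℝ} {a h K : ℝ} (hh : 0 ≤ h)
    (hf : ∀ x ∈ Icc (a - h) (a + h), HasDerivAt f (f' x) x)
    (hf' : ∀ x ∈ Icc (a - h) (a + h), HasDerivAt f' (f'' x) x)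
    (hK : ∀ u ∈ Icc 0 h, |f'' (a + u) + f'' (a - u)| ≤ K) :
    |f (a + h) + f (a - h) - 2 * f a| ≤ K / 2 * h ^ 2 := by
  have hmem : ∀ u ∈ Icc 0 h, a + u ∈ Icc (a - h) (a + h) ∧ a - u ∈ Icc (a - h) (a + h) :=
    fun u ⟨hu0, hu⟩ => ⟨⟨by linarith, by linarith⟩, ⟨by linarith, by linarith⟩⟩
  have hslope : ∀ u ∈ Icc 0 h, |f' (a + u) - f' (a - u)| ≤ K * u := by
    intro u hu
    have := norm_image_sub_le_of_norm_deriv_le_segment' (f := fun u => f' (a + u) - f' (a - u))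
      (fun v hv => ?_) (fun v hv => hK v (Ico_subset_Icc_self hv)) u hu
    · simpa using this
    · simpa using (((hf' _ (hmem v hv).1).comp_const_add a v).fun_sub
        ((hf' _ (hmem v hv).2).comp_const_sub a v)).hasDerivWithinAt
  have hF (u : ℝ) (hu : u ∈ Icc 0 h) :
      HasDerivAt (fun u => f (a + u) + f (a - u)) (f' (a + u) - f' (a - u)) u := by
    simpa [sub_eq_add_neg] using
      ((hf _ (hmem u hu).1).comp_const_add a u).fun_add ((hf _ (hmem u hu).2).comp_const_sub a u)
  simpa [two_mul] using abs_sub_le_of_abs_deriv_le_mul hh hF hslope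

theorem hasDerivAt_sqrt_one_sub_sq {x : ℝ} (hx : x ^ 2 < 1) :
    HasDerivAt (fun y => √(1 - y ^ 2)) (-x / √(1 - x ^ 2)) x := by
  have h₀ : 1 - x ^ 2 ≠ 0 := by linarith
  refine (((hasDerivAt_pow 2 x).const_sub 1).sqrt h₀).congr_deriv ?_
  field_simp
  ring

theorem hasDerivAt_one_div_sqrt_one_sub_sq {x : ℝ} (hx : x ^ 2 < 1) :
    HasDerivAt (fun y => 1 / √(1 - y ^ 2)) (x / √(1 - x ^ 2) ^ 3) x := by
  have hs : 0 < √(1 - x ^ 2) := sqrt_pos.mpr (by linarith)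
  simp only [one_div]
  refine ((hasDerivAt_sqrt_one_sub_sq hx).fun_inv hs.ne').congr_deriv ?_
  field_simp

theorem hasDerivAt_div_sqrt_one_sub_sq_pow_three {x : ℝ} (hx : x ^ 2 < 1) :
    HasDerivAt (fun y => y / √(1 - y ^ 2) ^ 3) ((1 + 2 * x ^ 2) / √(1 - x ^ 2) ^ 5) x := by
  have hs : 0 < √(1 - x ^ 2) := sqrt_pos.mpr (by linarith)
  have hsq : √(1 - x ^ 2) ^ 2 = 1 - x ^ 2 := sq_sqrt (by linarith)
  refine ((hasDerivAt_id x).fun_div ((hasDerivAt_sqrt_one_sub_sq hx).fun_pow 3)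
    (by positivity)).congr_deriv ?_
  simp only [id]
  field_simp
  linear_combination √(1 - x ^ 2) ^ 2 * hsq

theorem le_sqrt_one_sub_sq {x : ℝ} (hx : x ∈ Icc (-(5 / 8)) (5 / 8)) :
    39 / 50 ≤ √(1 - x ^ 2) := by
  rw [le_sqrt (by norm_num) (by nlinarith [hx.1, hx.2])]
  nlinarith [hx.1, hx.2]

theorem abs_arccos_sub_arccos_le {x y : ℝ} (hx : x ∈ Icc (-(5 / 8)) (5 / 8))
    (hy : y ∈ Icc (-(5 / 8)) (5 / 8)) : |arccos x - arccos y| ≤ 3 / 2 * |x - y| := by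
  refine (convex_Icc _ _).norm_image_sub_le_of_norm_hasDerivWithin_le
    (f' := fun z => -(1 / √(1 - z ^ 2))) (fun z hz => ?_) (fun z hz => ?_) hy hx
  · exact (hasDerivAt_arccos (by linarith [hz.1]) (by linarith [hz.2])).hasDerivWithinAt
  · have := le_sqrt_one_sub_sq hz
    rw [norm_neg, Real.norm_eq_abs, abs_of_pos (by positivity), div_le_iff₀ (by positivity)]
    linarith

theorem abs_div_sqrt_pow_three_sub_le {x y : ℝ} (hx : x ∈ Icc (-(5 / 8)) (5 / 8))
    (hy : y ∈ Icc (-(5 / 8)) (5 / 8)) :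
    |x / √(1 - x ^ 2) ^ 3 - y / √(1 - y ^ 2) ^ 3| ≤ 7 * |x - y| := by
  refine (convex_Icc _ _).norm_image_sub_le_of_norm_hasDerivWithin_le
    (f := fun z => z / √(1 - z ^ 2) ^ 3)
    (f' := fun z => (1 + 2 * z ^ 2) / √(1 - z ^ 2) ^ 5) (fun z hz => ?_) (fun z hz => ?_) hy hx
  · exact (hasDerivAt_div_sqrt_one_sub_sq_pow_three (by nlinarith [hz.1, hz.2])).hasDerivWithinAt
  · have hs := le_sqrt_one_sub_sq hz
    have hs5 : (39 / 50 : ℝ) ^ 5 ≤ √(1 - z ^ 2) ^ 5 := by gcongr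
    rw [Real.norm_eq_abs, abs_of_pos (by positivity), div_le_iff₀ (by positivity)]
    nlinarith [hz.1, hz.2]

theorem abs_arccos_symm_second_diff_le {a h : ℝ} (hh : 0 ≤ h)
    (hJ : Icc (a - h) (a + h) ⊆ Icc (-(5 / 8)) (5 / 8)) :
    |arccos (a + h) + arccos (a - h) - 2 * arccos a| ≤ 7 * |a| * h ^ 2 := by
  have hsq {x : ℝ} (hx : x ∈ Icc (a - h) (a + h)) : x ^ 2 < 1 := by
    nlinarith [(hJ hx).1, (hJ hx).2]
  have hK : ∀ u ∈ Icc 0 h,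
      |-((a + u) / √(1 - (a + u) ^ 2) ^ 3) + -((a - u) / √(1 - (a - u) ^ 2) ^ 3)|
        ≤ 14 * |a| := by
    intro u ⟨hu0, hu⟩
    have h₁ : a + u ∈ Icc (-(5 / 8)) (5 / 8) := hJ ⟨by linarith, by linarith⟩
    have h₂ : a - u ∈ Icc (-(5 / 8)) (5 / 8) := hJ ⟨by linarith, by linarith⟩
    have h₃ : u - a ∈ Icc (-(5 / 8)) (5 / 8) := ⟨by linarith [h₂.2], by linarith [h₂.1]⟩
    have hodd : (a - u) / √(1 - (a - u) ^ 2) ^ 3 = -((u - a) / √(1 - (u - a) ^ 2) ^ 3) := by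
      rw [show a - u = -(u - a) by ring, neg_sq, neg_div]
    calc _ = |(a + u) / √(1 - (a + u) ^ 2) ^ 3 - (u - a) / √(1 - (u - a) ^ 2) ^ 3| := by
          rw [hodd, ← abs_neg]; ring_nf
      _ ≤ 7 * |a + u - (u - a)| := abs_div_sqrt_pow_three_sub_le h₁ h₃
      _ = 14 * |a| := by rw [show a + u - (u - a) = 2 * a by ring, abs_mul, abs_two]; ring
  have := abs_symm_second_diff_le (f := arccos) (f' := fun x => -(1 / √(1 - x ^ 2)))
    (f'' := fun x => -(x / √(1 - x ^ 2) ^ 3)) hh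
    (fun x hx => hasDerivAt_arccos (by nlinarith [hsq hx]) (by nlinarith [hsq hx]))
    (fun x hx => (hasDerivAt_one_div_sqrt_one_sub_sq (hsq hx)).neg) hK
  linarith

theorem abs_arccos_add_arccos_sub_two_mul_arccos_neg_half_le {σ t : ℝ} (hσ : 0 < σ)
    (hσt : 2 * σ < t) (ht : t < 1 / 4) :
    |arccos ((-t ^ 2 + 2 * σ + σ ^ 2) / (2 * t)) + arccos ((-t ^ 2 - 2 * σ + σ ^ 2) / (2 * t)) -
        2 * arccos (-t / 2)| ≤ 5 * σ ^ 2 / t := by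
  have ht₀ : 0 < t := by linarith
  set a : ℝ := (σ ^ 2 - t ^ 2) / (2 * t) with ha_def
  set h : ℝ := σ / t with hh_def
  have hplus : (-t ^ 2 + 2 * σ + σ ^ 2) / (2 * t) = a + h := by
    rw [ha_def, hh_def]; field_simp; ring
  have hminus : (-t ^ 2 - 2 * σ + σ ^ 2) / (2 * t) = a - h := by
    rw [ha_def, hh_def]; field_simp; ring
  have hh₀ : 0 ≤ h := by positivity
  have hh₁ : h < 1 / 2 := by rw [hh_def, div_lt_iff₀ ht₀]; linarith
  have ha₀ : -(t / 2) ≤ a := by rw [ha_def, le_div_iff₀ (by positivity)]; nlinarith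
  have ha₁ : a ≤ 0 := div_nonpos_of_nonpos_of_nonneg (by nlinarith) (by positivity)
  have hJ : Icc (a - h) (a + h) ⊆ Icc (-(5 / 8)) (5 / 8) :=
    Icc_subset_Icc (by linarith) (by linarith)
  have hsym := abs_arccos_symm_second_diff_le hh₀ hJ
  have ha_mem : a ∈ Icc (a - h) (a + h) := ⟨by linarith, by linarith⟩
  have hlip := abs_arccos_sub_arccos_le (hJ ha_mem)
    (⟨by linarith, by linarith⟩ : -t / 2 ∈ Icc (-(5 / 8 : ℝ)) (5 / 8))
  have hshift : |a - -t / 2| = σ ^ 2 / (2 * t) := by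
    rw [abs_of_nonneg (by linarith), ha_def]; field_simp; ring
  rw [hplus, hminus]
  calc _ = |(arccos (a + h) + arccos (a - h) - 2 * arccos a) +
        2 * (arccos a - arccos (-t / 2))| := by ring_nf
    _ ≤ 7 * |a| * h ^ 2 + 2 * (3 / 2 * |a - -t / 2|) := by
        refine (abs_add_le _ _).trans ?_
        rw [abs_mul, abs_two]
        linarith
    _ ≤ 7 * (t / 2) * h ^ 2 + 2 * (3 / 2 * (σ ^ 2 / (2 * t))) := by
        rw [abs_of_nonpos ha₁, hshift]
        gcongr
        linarith
    _ = 5 * σ ^ 2 / t := by rw [hh_def]; field_simp; ring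

theorem lt_arccos_of_lt_cos {x y : ℝ} (hy₀ : 0 ≤ y) (hyπ : y ≤ π) (hx : -1 ≤ x)
    (h : x < cos y) : y < arccos x := by
  simpa [arccos_cos hy₀ hyπ] using arccos_lt_arccos hx h (cos_le_one y)

theorem arccos_lt_of_cos_lt {x y : ℝ} (hy₀ : 0 ≤ y) (hyπ : y ≤ π) (hx : x ≤ 1)
    (h : cos y < x) : arccos x < y := by
  simpa [arccos_cos hy₀ hyπ] using arccos_lt_arccos (neg_one_le_cos y) h hx

theorem cos_seven_pi_div_twelve_le : cos (7 * π / 12) ≤ -1 / 6 := by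
  have := mul_le_sin (x := π / 12) (by positivity) (by linarith [pi_pos])
  rw [show 7 * π / 12 = π / 12 + π / 2 by ring, cos_add_pi_div_two]
  field_simp at this
  linarith

theorem cos_three_pi_div_four_lt : cos (3 * π / 4) < -5 / 8 := by
  rw [show 3 * π / 4 = π - π / 4 by ring, cos_pi_sub, cos_pi_div_four]
  have : 5 / 4 < √2 := by rw [lt_sqrt (by norm_num)]; norm_num
  linarith

theorem angle_estimates_general (σ t : ℝ) (hσ0 : 0 < σ)
    (ht0 : 2 * σ < t) (ht : t < 1 / 4) :
    arccos ((-t ^ 2 + 2 * σ + σ ^ 2) / (2 * t)) < arccos (-t / 2) ∧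
    arccos (-t / 2) < arccos ((-t ^ 2 - 2 * σ + σ ^ 2) / (2 * t)) ∧
    π / 3 < arccos ((-t ^ 2 + 2 * σ + σ ^ 2) / (2 * t)) ∧
    π / 2 < arccos (-t / 2) ∧
    arccos (-t / 2) < 7 * π / 12 ∧
    arccos ((-t ^ 2 - 2 * σ + σ ^ 2) / (2 * t)) < 3 * π / 4 ∧
    |arccos ((-t ^ 2 + 2 * σ + σ ^ 2) / (2 * t)) +
        arccos ((-t ^ 2 - 2 * σ + σ ^ 2) / (2 * t)) - 2 * arccos (-t / 2)|
      ≤ 5 * σ ^ 2 / t ∧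
    5 * σ ^ 2 / t ≤ 3 * σ := by
  have ht₀ : 0 < t := by linarith
  have hπ := pi_pos
  have hplus₁ : -t / 2 < (-t ^ 2 + 2 * σ + σ ^ 2) / (2 * t) := by
    rw [lt_div_iff₀ (by positivity)]; nlinarith
  have hplus₂ : (-t ^ 2 + 2 * σ + σ ^ 2) / (2 * t) < 1 / 2 := by
    rw [div_lt_iff₀ (by positivity)]; nlinarith
  have hminus₁ : -5 / 8 < (-t ^ 2 - 2 * σ + σ ^ 2) / (2 * t) := by
    rw [lt_div_iff₀ (by positivity)]; nlinarith
  have hminus₂ : (-t ^ 2 - 2 * σ + σ ^ 2) / (2 * t) < -t / 2 := by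
    rw [div_lt_iff₀ (by positivity)]; nlinarith
  refine ⟨arccos_lt_arccos (by linarith) hplus₁ (by linarith),
    arccos_lt_arccos (by linarith) hminus₂ (by linarith), ?_, ?_, ?_, ?_,
    abs_arccos_add_arccos_sub_two_mul_arccos_neg_half_le hσ0 ht0 ht, ?_⟩
  · exact lt_arccos_of_lt_cos (by positivity) (by linarith) (by linarith)
      (by rwa [cos_pi_div_three])
  · exact lt_arccos_of_lt_cos (by positivity) (by linarith) (by linarith)
      (by rw [cos_pi_div_two]; linarith)
  · exact arccos_lt_of_cos_lt (by positivity) (by linarith) (by linarith)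
      (by linarith [cos_seven_pi_div_twelve_le])
  · exact arccos_lt_of_cos_lt (by positivity) (by linarith) (by linarith)
      (by linarith [cos_three_pi_div_four_lt])
  · rw [div_le_iff₀ ht₀]; nlinarith

/-- Let `0 < σ ≤ 1/4` and `2σ < t < 1/4`, and define the angles
`θ = arccos(−t/2)`, `θ⁺ = arccos((−t² + 2σ + σ²)/(2t))`, `θ⁻ = arccos((−t² − 2σ + σ²)/(2t))`.
Then `θ⁺ < θ < θ⁻`, with `π/3 < θ⁺`, `π/2 < θ < 7π/12`, `θ⁻ < 3π/4`, and moreover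
`|θ⁺ + θ⁻ − 2θ| ≤ 5σ²/t ≤ 3σ`. -/
theorem angle_estimates (σ t : ℝ) (hσ0 : 0 < σ) (hσ : σ ≤ 1 / 4)
    (ht0 : 2 * σ < t) (ht : t < 1 / 4) :
    arccos ((-t ^ 2 + 2 * σ + σ ^ 2) / (2 * t)) < arccos (-t / 2) ∧
    arccos (-t / 2) < arccos ((-t ^ 2 - 2 * σ + σ ^ 2) / (2 * t)) ∧
    π / 3 < arccos ((-t ^ 2 + 2 * σ + σ ^ 2) / (2 * t)) ∧
    π / 2 < arccos (-t / 2) ∧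
    arccos (-t / 2) < 7 * π / 12 ∧
    arccos ((-t ^ 2 - 2 * σ + σ ^ 2) / (2 * t)) < 3 * π / 4 ∧
    |arccos ((-t ^ 2 + 2 * σ + σ ^ 2) / (2 * t)) +
        arccos ((-t ^ 2 - 2 * σ + σ ^ 2) / (2 * t)) - 2 * arccos (-t / 2)|
      ≤ 5 * σ ^ 2 / t ∧
    5 * σ ^ 2 / t ≤ 3 * σ :=
  angle_estimates_general σ t hσ0 ht0 ht
end

section
/- Let N ≥ 2, let 0 < σ ≤ 1/4 and 2σ < t < 1/4, and define θ = arccos(−t/2), θ⁺ = arccos((−t² + 2σ + σ²)/(2t)), θ⁻ = arccos((−t² − 2σ + σ²)/(2t)). Then K := |∫_{θ⁺}^{θ} [(sin α)^{N−2} − (sin θ)^{N−2}] dα − ∫_{θ}^{θ⁻} [(sin α)^{N−2} − (sin θ)^{N−2}] dα| ≤ 9 (N−2) σ. -/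
open Real Set intervalIntegral MeasureTheory

/-!
Write `k = N - 2`. The substitution `u = cos α` turns both integrals into integrals of
`g u = ((1 - u²)^(k/2) - sin^k θ) / √(1 - u²)`, over `[-t/2, -t/2 + p]` and `[-t/2 - q, -t/2]`,
where `p = (2σ + σ²)/(2t)` and `q = (2σ - σ²)/(2t)`. Near the origin `g` is `(k + 2)`-Lipschitz
as a function of `u²` (so it is even), and it vanishes at `±t/2`. Reflecting the second
interval about `-t/2` pairs `g u` with `g (-t - u) = g (u + t)`, which differ by `O(k t q)`, so the
two integrals cancel up to `O(k t q²) = O(kσ)` on a piece of length `q`; the leftover piece has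
length `p - q = σ²/t`, and there `|g| = O(k p)`, contributing `O(k p σ²/t) = O(kσ)`.
-/

theorem integral_comp_sin_eq_integral_div_sqrt {F : ℝ → ℝ} (hF : Continuous F) {q c : ℝ}
    (hq : q ∈ Ioo (-1) 1) (hc : c ∈ Ioo (-1) 1) :
    ∫ x in arccos q..arccos c, F (sin x) = ∫ u in c..q, F (√(1 - u ^ 2)) / √(1 - u ^ 2) := by
  have hsub : uIcc q c ⊆ Ioo (-1) 1 := (ordConnected_Ioo).uIcc_subset hq hc
  have hpos : ∀ u ∈ uIcc q c, 0 < 1 - u ^ 2 := fun u hu => by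
    obtain ⟨h1, h2⟩ := hsub hu
    nlinarith
  have key := integral_comp_mul_deriv (f := arccos) (f' := fun u => -(1 / √(1 - u ^ 2)))
    (g := F ∘ sin)
    (fun u hu => hasDerivAt_arccos (hsub hu).1.ne' (hsub hu).2.ne)
    (ContinuousOn.neg (continuousOn_const.div (by fun_prop)
      fun u hu => (sqrt_pos.2 (hpos u hu)).ne'))
    (hF.comp continuous_sin)
  change _ = ∫ x in arccos q..arccos c, F (sin x) at key
  rw [← key, integral_symm, ← intervalIntegral.integral_neg]
  refine integral_congr fun u _ => ?_
  simp only [Function.comp_apply, sin_arccos]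
  ring

lemma abs_pow_sub_pow_le_of_abs_le_one {r s : ℝ} (hr : |r| ≤ 1) (hs : |s| ≤ 1) (m : ℕ) :
    |r ^ m - s ^ m| ≤ m * |r - s| := by
  calc |r ^ m - s ^ m| ≤ |r - s| * m * max |r| |s| ^ (m - 1) := abs_pow_sub_pow_le r s m
    _ ≤ |r - s| * m * 1 := by gcongr; exact pow_le_one₀ (by positivity) (max_le hr hs)
    _ = m * |r - s| := by ring

lemma abs_pow_succ_sub_div_sub_le {S r s : ℝ} (m : ℕ) (hS : |S| ≤ 1) (hr : r ∈ Icc (7 / 10) 1)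
    (hs : s ∈ Icc (7 / 10) 1) :
    |(r ^ (m + 1) - S ^ (m + 1)) / r - (s ^ (m + 1) - S ^ (m + 1)) / s| ≤ (m + 3) * |r - s| := by
  obtain ⟨hr0, hr1⟩ := hr
  obtain ⟨hs0, hs1⟩ := hs
  have hrs : 49 / 100 ≤ r * s := by nlinarith
  have hpow : |r ^ m - s ^ m| ≤ m * |r - s| :=
    abs_pow_sub_pow_le_of_abs_le_one (abs_le.2 ⟨by linarith, hr1⟩) (abs_le.2 ⟨by linarith, hs1⟩) m
  have hinv : |S ^ (m + 1) * (r - s) / (r * s)| ≤ 3 * |r - s| := by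
    rw [abs_div, abs_mul, abs_of_pos (by linarith : 0 < r * s), div_le_iff₀ (by linarith)]
    have : |S ^ (m + 1)| ≤ 1 := by rw [abs_pow]; exact pow_le_one₀ (abs_nonneg S) hS
    nlinarith [abs_nonneg (r - s), abs_nonneg (S ^ (m + 1))]
  have hsplit : (r ^ (m + 1) - S ^ (m + 1)) / r - (s ^ (m + 1) - S ^ (m + 1)) / s
      = (r ^ m - s ^ m) + S ^ (m + 1) * (r - s) / (r * s) := by
    field_simp
    ring
  rw [hsplit]
  linarith [abs_add_le (r ^ m - s ^ m) (S ^ (m + 1) * (r - s) / (r * s))]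

lemma abs_sqrt_one_sub_sq_sub_le {a b : ℝ} (ha : a ^ 2 ≤ 1 / 2) (hb : b ^ 2 ≤ 1 / 2) :
    |√(1 - a ^ 2) - √(1 - b ^ 2)| ≤ |a ^ 2 - b ^ 2| := by
  have hsum : 1 ≤ √(1 - a ^ 2) + √(1 - b ^ 2) := by
    have h1 : 1 / 2 ≤ √(1 - a ^ 2) := le_sqrt_of_sq_le (by linarith)
    have h2 : 1 / 2 ≤ √(1 - b ^ 2) := le_sqrt_of_sq_le (by linarith)
    linarith
  have hprod : (√(1 - a ^ 2) - √(1 - b ^ 2)) * (√(1 - a ^ 2) + √(1 - b ^ 2)) = b ^ 2 - a ^ 2 := by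
    linear_combination sq_sqrt (by linarith : 0 ≤ 1 - a ^ 2) - sq_sqrt (by linarith : 0 ≤ 1 - b ^ 2)
  rw [abs_sub_comm (a ^ 2) (b ^ 2), ← hprod, abs_mul, abs_of_pos (zero_lt_one.trans_le hsum)]
  exact le_mul_of_one_le_right (abs_nonneg _) hsum

/-- The function `g` of the header, with `k = m + 1`. -/
noncomputable def substIntegrand (m : ℕ) (S u : ℝ) : ℝ :=
  (√(1 - u ^ 2) ^ (m + 1) - S ^ (m + 1)) / √(1 - u ^ 2)

lemma abs_substIntegrand_sub_le {S a b : ℝ} (m : ℕ) (hS : |S| ≤ 1) (ha : a ^ 2 ≤ 1 / 2)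
    (hb : b ^ 2 ≤ 1 / 2) :
    |substIntegrand m S a - substIntegrand m S b| ≤ (m + 3) * |a ^ 2 - b ^ 2| := by
  have hmem : ∀ u : ℝ, u ^ 2 ≤ 1 / 2 → √(1 - u ^ 2) ∈ Icc (7 / 10) 1 := fun u hu =>
    ⟨le_sqrt_of_sq_le (by linarith), sqrt_le_one.2 (by nlinarith)⟩
  calc |substIntegrand m S a - substIntegrand m S b|
      ≤ (m + 3) * |√(1 - a ^ 2) - √(1 - b ^ 2)| :=
        abs_pow_succ_sub_div_sub_le m hS (hmem a ha) (hmem b hb)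
    _ ≤ (m + 3) * |a ^ 2 - b ^ 2| :=
        mul_le_mul_of_nonneg_left (abs_sqrt_one_sub_sq_sub_le ha hb) (by positivity)

lemma continuousOn_substIntegrand (m : ℕ) (S : ℝ) :
    ContinuousOn (substIntegrand m S) (Ioo (-1) 1) := by
  refine ContinuousOn.div (by fun_prop) (by fun_prop) fun u hu => (sqrt_pos.2 ?_).ne'
  nlinarith [hu.1, hu.2]

lemma abs_integral_sub_integral_reflect_le {g : ℝ → ℝ} {L ℓ c p q : ℝ}
    (hg : ContinuousOn g (Icc (-ℓ) ℓ))
    (hLip : ∀ a ∈ Icc (-ℓ) ℓ, ∀ b ∈ Icc (-ℓ) ℓ, |g a - g b| ≤ L * |a ^ 2 - b ^ 2|)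
    (hL : 0 ≤ L) (hgc : g c = 0) (hc : 0 ≤ c) (hq : 0 ≤ q) (hqp : q ≤ p) (hpℓ : c + p ≤ ℓ) :
    |(∫ u in -c..-c + p, g u) - ∫ u in -c - q..-c, g u|
      ≤ L * (4 * c * q ^ 2 + p * (p + 2 * c) * (p - q)) := by
  have hmem : ∀ u, -c - p ≤ u → u ≤ c + p → u ∈ Icc (-ℓ) ℓ := fun u h1 h2 =>
    ⟨by linarith, by linarith⟩
  have hint : ∀ a b, -c ≤ a → a ≤ b → b ≤ -c + p → IntervalIntegrable g volume a b :=
    fun a b ha hab hb => ContinuousOn.intervalIntegrable_of_Icc hab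
      (hg.mono fun u hu => hmem u (by linarith [hu.1]) (by linarith [hu.2]))
  have hint_refl : IntervalIntegrable (fun w => g (-2 * c - w)) volume (-c) (-c + q) :=
    ContinuousOn.intervalIntegrable_of_Icc (by linarith)
      (hg.comp (by fun_prop) fun w hw => hmem _ (by linarith [hw.2]) (by linarith [hw.1]))
  have hrefl : ∫ u in -c - q..-c, g u = ∫ w in -c..-c + q, g (-2 * c - w) := by
    rw [integral_comp_sub_left]
    congr 1 <;> ring
  have hsplit : (∫ u in -c..-c + p, g u) - ∫ u in -c - q..-c, g u
      = (∫ w in -c..-c + q, (g w - g (-2 * c - w))) + ∫ w in -c + q..-c + p, g w := by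
    rw [hrefl, integral_sub (hint _ _ le_rfl (by linarith) (by linarith)) hint_refl,
      ← integral_add_adjacent_intervals (hint (-c) (-c + q) le_rfl (by linarith) (by linarith))
        (hint (-c + q) (-c + p) (by linarith) (by linarith) le_rfl)]
    ring
  have hnear : |∫ w in -c..-c + q, (g w - g (-2 * c - w))| ≤ L * (4 * c * q) * q := by
    have := norm_integral_le_of_norm_le_const (a := -c) (b := -c + q) (C := L * (4 * c * q))
      (f := fun w => g w - g (-2 * c - w)) fun w hw => by
        rw [uIoc_of_le (by linarith)] at hw
        obtain ⟨hw1, hw2⟩ := hw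
        refine (hLip _ (hmem _ (by linarith) (by linarith))
          _ (hmem _ (by linarith) (by linarith))).trans (mul_le_mul_of_nonneg_left ?_ hL)
        rw [abs_le]
        constructor <;> nlinarith
    simpa [abs_of_nonneg hq] using this
  have hfar : |∫ w in -c + q..-c + p, g w| ≤ L * (p * (p + 2 * c)) * (p - q) := by
    have := norm_integral_le_of_norm_le_const (a := -c + q) (b := -c + p)
      (C := L * (p * (p + 2 * c))) (f := g) fun w hw => by
        rw [uIoc_of_le (by linarith)] at hw
        obtain ⟨hw1, hw2⟩ := hw
        rw [Real.norm_eq_abs, ← sub_zero (g w), ← hgc]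
        refine (hLip _ (hmem _ (by linarith) (by linarith))
          _ (hmem _ (by linarith) (by linarith))).trans (mul_le_mul_of_nonneg_left ?_ hL)
        rw [abs_le]
        constructor <;> nlinarith
    simpa [abs_of_nonneg (sub_nonneg.2 hqp)] using this
  rw [hsplit]
  calc _ ≤ _ := abs_add_le _ _
    _ ≤ L * (4 * c * q) * q + L * (p * (p + 2 * c)) * (p - q) := add_le_add hnear hfar
    _ = _ := by ring

lemma cos_offsets_estimates {σ t p q : ℝ} (hσ0 : 0 < σ) (hσ : σ ≤ 1 / 4) (ht0 : 2 * σ < t)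
    (ht : t < 1 / 4) (hp : 2 * t * p = 2 * σ + σ ^ 2) (hq : 2 * t * q = 2 * σ - σ ^ 2) :
    0 ≤ q ∧ q ≤ p ∧ t / 2 + p ≤ 11 / 16 ∧
      4 * (t / 2) * q ^ 2 + p * (p + 2 * (t / 2)) * (p - q) ≤ 3 / 2 * σ := by
  have htpos : 0 < t := by linarith
  have hq0 : 0 ≤ q := by nlinarith
  have hqhalf : q ≤ 1 / 2 := by nlinarith
  have hpq : t * (p - q) = σ ^ 2 := by linear_combination (hp - hq) / 2
  have hqp : q ≤ p := by nlinarith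
  have hp916 : p ≤ 9 / 16 := by nlinarith
  have hnear : 2 * t * q ^ 2 ≤ σ := by nlinarith
  have hfar : p * (p - q) ≤ 9 / 32 * σ := by
    have htp : t * p ≤ 9 / 8 * σ := by nlinarith
    have hsq : t ^ 2 * (p * (p - q)) ≤ 9 / 8 * σ ^ 3 := by
      have : t ^ 2 * (p * (p - q)) = (t * p) * σ ^ 2 := by rw [← hpq]; ring
      rw [this]
      nlinarith
    have ht2 : 4 * σ ^ 2 ≤ t ^ 2 := by nlinarith
    nlinarith [mul_nonneg (by linarith : (0:ℝ) ≤ p) (sub_nonneg.2 hqp)]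
  refine ⟨hq0, hqp, by linarith, ?_⟩
  have : p * (p + 2 * (t / 2)) * (p - q) ≤ p * (p - q) := by
    have h0 : 0 ≤ p * (p - q) := mul_nonneg (by linarith) (sub_nonneg.2 hqp)
    nlinarith
  nlinarith

/-- Let `N ≥ 2`, `0 < σ ≤ 1/4`, `2σ < t < 1/4`, and let `θ = arccos(−t/2)`,
`θ⁺ = arccos((−t² + 2σ + σ²)/(2t))`, `θ⁻ = arccos((−t² − 2σ + σ²)/(2t))`.  Then
`K = |∫_{θ⁺}^{θ} [(sin α)^{N−2} − (sin θ)^{N−2}] dα − ∫_{θ}^{θ⁻} [(sin α)^{N−2} − (sin θ)^{N−2}] dα|`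
satisfies `K ≤ 9 (N−2) σ`. -/
theorem sine_integral_estimate {N : ℕ} (hN : 2 ≤ N) (σ t : ℝ) (hσ0 : 0 < σ)
    (hσ : σ ≤ 1 / 4) (ht0 : 2 * σ < t) (ht : t < 1 / 4) :
    |(∫ α in arccos ((-t ^ 2 + 2 * σ + σ ^ 2) / (2 * t))..arccos (-t / 2),
        ((sin α) ^ (N - 2) - (sin (arccos (-t / 2))) ^ (N - 2))) -
      (∫ α in arccos (-t / 2)..arccos ((-t ^ 2 - 2 * σ + σ ^ 2) / (2 * t)),
        ((sin α) ^ (N - 2) - (sin (arccos (-t / 2))) ^ (N - 2)))|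
      ≤ 9 * ((N : ℝ) - 2) * σ := by
  obtain ⟨k, rfl⟩ := Nat.exists_eq_add_of_le' hN
  rcases k with _ | m
  · simp
  have htpos : 0 < t := by linarith
  set S := sin (arccos (-t / 2))
  obtain ⟨p, hp⟩ : ∃ p, 2 * t * p = 2 * σ + σ ^ 2 := ⟨(2 * σ + σ ^ 2) / (2 * t), by field_simp⟩
  obtain ⟨q, hq⟩ : ∃ q, 2 * t * q = 2 * σ - σ ^ 2 := ⟨(2 * σ - σ ^ 2) / (2 * t), by field_simp⟩
  obtain ⟨hq0, hqp, hpℓ, hbound⟩ := cos_offsets_estimates hσ0 hσ ht0 ht hp hq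
  have hθp : (-t ^ 2 + 2 * σ + σ ^ 2) / (2 * t) = -(t / 2) + p := by
    rw [div_eq_iff (by positivity)]; linear_combination -hp
  have hθm : (-t ^ 2 - 2 * σ + σ ^ 2) / (2 * t) = -(t / 2) - q := by
    rw [div_eq_iff (by positivity)]; linear_combination hq
  have hsubst : ∀ a ∈ Ioo (-1 : ℝ) 1, ∀ b ∈ Ioo (-1 : ℝ) 1,
      ∫ x in arccos a..arccos b, (sin x ^ (m + 1) - S ^ (m + 1))
        = ∫ u in b..a, substIntegrand m S u := fun a ha b hb =>
    integral_comp_sin_eq_integral_div_sqrt (F := fun s => s ^ (m + 1) - S ^ (m + 1))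
      (by fun_prop) ha hb
  simp only [Nat.add_sub_cancel]
  rw [hθp, hθm, neg_div, hsubst _ ⟨by linarith, by linarith⟩ _ ⟨by linarith, by linarith⟩,
    hsubst _ ⟨by linarith, by linarith⟩ _ ⟨by linarith, by linarith⟩]
  have hsq : ∀ a ∈ Icc (-(11 / 16) : ℝ) (11 / 16), a ^ 2 ≤ 1 / 2 := fun a ha => by
    nlinarith [ha.1, ha.2]
  refine (abs_integral_sub_integral_reflect_le
    (continuousOn_substIntegrand m S |>.mono (Icc_subset_Ioo (by norm_num) (by norm_num)))
    (fun a ha b hb => abs_substIntegrand_sub_le m (abs_sin_le_one _) (hsq a ha) (hsq b hb))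
    (by positivity) ?_ (by positivity) hq0 hqp hpℓ).trans ?_
  · simp [substIntegrand, S, sin_arccos, neg_div]
  · push_cast
    nlinarith
end
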